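/- arXiv:2402.17956 — 2 statements merged into one kernel-verified Lean document; each statement's English description precedes it below -/
import Mathlib

section
/- Let K be a group with subgroups Ū and T such that every k ∈ K factors as k = n̄ t with n̄ ∈ Ū, t ∈ T (i.e. K = Ū T), let K act on a set X, and let ε : W → X be a T-equivariant injection from a T-set W such that Ū acts freely on Ū·ε(W) and (Ū·ε(w)) ∩ ε(W) = {ε(w)} for all w. Then the map K ×_T W → K·ε(W), [k,w] ↦ k·ε(w) is a bijection. -/
/-!
If `k • ε w = ε w'`, factor `k = n̄ t`. Equivariance turns this into `n̄ • ε (t • w) = ε w'`, so the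
intersection condition forces `w' = t • w`, and then `n̄` fixes `ε w'`, so freeness forces `n̄ = 1`.
Hence `k • ε w` determines the class of `(k, w)` in `K ×_T W`, i.e. the map is injective.
-/

/-- The defining relation of the induced bundle `K ×_T W`:
`(kt, w) ~ (k, t • w)`. -/
def inducedRelT (K : Type*) [Group K] (T : Subgroup K) (W : Type*)
    [MulAction T W] : (K × W) → (K × W) → Prop :=
  fun a b => ∃ t : T, a.1 = b.1 * (t : K) ∧ b.2 = t • a.2

noncomputable def Quot.equivRangeOfIff {α β : Type*} {r : α → α → Prop} (f : α → β)
    (h : ∀ a b, f a = f b ↔ r a b) : Quot r ≃ Set.range f :=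
  (Quot.congrRight fun a b => (h a b).symm).trans (Setoid.quotientKerEquivRange f)

section InducedBundle

variable {K X W : Type*} [Group K] [MulAction K X] {Ubar T : Subgroup K} [MulAction T W]
  {ε : W → X}

theorem exists_eq_and_eq_smul_of_smul_eq
    (hfact : ∀ k : K, ∃ nbar t : K, nbar ∈ Ubar ∧ t ∈ T ∧ k = nbar * t)
    (hequiv : ∀ (t : T) (w : W), ε (t • w) = (t : K) • ε w)
    (hfree : ∀ nbar ∈ Ubar, ∀ w : W, nbar • ε w = ε w → nbar = 1)
    (hcap : ∀ nbar ∈ Ubar, ∀ w w' : W, nbar • ε w = ε w' → w' = w)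
    {k : K} {w w' : W} (h : k • ε w = ε w') : ∃ t : T, k = t ∧ w' = t • w := by
  obtain ⟨nbar, t, hn, ht, rfl⟩ := hfact k
  have hmove : nbar • ε ((⟨t, ht⟩ : T) • w) = ε w' := by rw [hequiv, ← mul_smul, h]
  have hw' : w' = (⟨t, ht⟩ : T) • w := hcap nbar hn _ _ hmove
  have hn1 : nbar = 1 := hfree nbar hn w' (by rwa [← hw'] at hmove)
  exact ⟨⟨t, ht⟩, by rw [hn1, one_mul], hw'⟩

theorem smul_eq_smul_iff_inducedRelT
    (hfact : ∀ k : K, ∃ nbar t : K, nbar ∈ Ubar ∧ t ∈ T ∧ k = nbar * t)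
    (hequiv : ∀ (t : T) (w : W), ε (t • w) = (t : K) • ε w)
    (hfree : ∀ nbar ∈ Ubar, ∀ w : W, nbar • ε w = ε w → nbar = 1)
    (hcap : ∀ nbar ∈ Ubar, ∀ w w' : W, nbar • ε w = ε w' → w' = w)
    (a b : K × W) : a.1 • ε a.2 = b.1 • ε b.2 ↔ inducedRelT K T W a b := by
  constructor
  · intro h
    have h' : (b.1⁻¹ * a.1) • ε a.2 = ε b.2 := by rw [mul_smul, h, inv_smul_smul]
    obtain ⟨t, ht, hb⟩ := exists_eq_and_eq_smul_of_smul_eq hfact hequiv hfree hcap h'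
    exact ⟨t, by rw [← ht, mul_inv_cancel_left], hb⟩
  · rintro ⟨t, ha, hb⟩
    rw [ha, hb, hequiv, mul_smul]

end InducedBundle

theorem stmt18_general (K : Type*) [Group K] (Ubar T : Subgroup K)
    (hfact : ∀ k : K, ∃ nbar t : K, nbar ∈ Ubar ∧ t ∈ T ∧ k = nbar * t)
    (X : Type*) [MulAction K X] (W : Type*) [MulAction T W]
    (ε : W → X)
    (hequiv : ∀ (t : T) (w : W), ε (t • w) = (t : K) • ε w)
    (hfree : ∀ nbar ∈ Ubar, ∀ y : X,
      (∃ nbar' ∈ Ubar, ∃ w : W, y = nbar' • ε w) → nbar • y = y → nbar = 1)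
    (hcap : ∀ nbar ∈ Ubar, ∀ w w' : W, nbar • ε w = ε w' → w' = w) :
    (∀ a b : K × W,
      a.1 • ε a.2 = b.1 • ε b.2 ↔
        ∃ t : T, a.1 = b.1 * (t : K) ∧ b.2 = t • a.2) ∧
    Nonempty (Quot (inducedRelT K T W) ≃
      Set.range fun kw : K × W => kw.1 • ε kw.2) := by
  have hfree_image : ∀ nbar ∈ Ubar, ∀ w : W, nbar • ε w = ε w → nbar = 1 :=
    fun nbar hn w => hfree nbar hn (ε w) ⟨1, Ubar.one_mem, w, (one_smul K _).symm⟩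
  have hfiber := smul_eq_smul_iff_inducedRelT hfact hequiv hfree_image hcap
  exact ⟨hfiber, ⟨Quot.equivRangeOfIff (fun kw : K × W => kw.1 • ε kw.2) hfiber⟩⟩

/-- If `K = Ū T`, `ε : W → X` is a `T`-equivariant injection, `Ū` acts freely
on `Ū · ε(W)` and `(Ū · ε w) ∩ ε(W) = {ε w}`, then `[k, w] ↦ k • ε w` is a
bijection from `K ×_T W` onto `K · ε(W)`. -/
theorem stmt18 (K : Type*) [Group K] (Ubar T : Subgroup K)
    (hfact : ∀ k : K, ∃ nbar t : K, nbar ∈ Ubar ∧ t ∈ T ∧ k = nbar * t)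
    (X : Type*) [MulAction K X] (W : Type*) [MulAction T W]
    (ε : W → X) (hinj : Function.Injective ε)
    (hequiv : ∀ (t : T) (w : W), ε (t • w) = (t : K) • ε w)
    (hfree : ∀ nbar ∈ Ubar, ∀ y : X,
      (∃ nbar' ∈ Ubar, ∃ w : W, y = nbar' • ε w) → nbar • y = y → nbar = 1)
    (hcap : ∀ nbar ∈ Ubar, ∀ w w' : W, nbar • ε w = ε w' → w' = w) :
    (∀ a b : K × W,
      a.1 • ε a.2 = b.1 • ε b.2 ↔
        ∃ t : T, a.1 = b.1 * (t : K) ∧ b.2 = t • a.2) ∧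
    Nonempty (Quot (inducedRelT K T W) ≃
      Set.range fun kw : K × W => kw.1 • ε kw.2) :=
  stmt18_general K Ubar T hfact X W ε hequiv hfree hcap
end

section
/- Let λ ∈ gl(n,ℂ) be integral diagonal with adjacent gaps, x ∈ g(-1), and ε(x) = exp(x_1)···exp(x_ℓ)·p the translated parabolic. Then the stabilizer of ε(x) in L (block-diagonal matrices) equals the stabilizer of x in L, i.e. Z_L(x) = Z_L(ε(x)). -/
/-!
Grade the entries of `n × n` matrices by `d i - d j`, so that `g(k)` is `degreeIn ℂ d {k}` and
`p` is `degreeIn ℂ d (Ici 0)`. As `x_j² = 0`, both `u = ∏ (1 + x_j)` and its inverse are `1 ± X`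
modulo degrees `≤ -2`, where `X = ∑ x_j`; hence for block-diagonal `m` the conjugate `u⁻¹ m u`
agrees with `m + [m, X]` in degrees `0` and `-1`.

If `l` stabilizes `u p u⁻¹`, then `g = u⁻¹ l u` normalizes `p`; testing this on the idempotents
`E_jj ∈ p` forces the degree `-1` part `[l, X]` of `g` to vanish. Conversely, since the `x_j` live
in pairwise different column degrees, `x_j = X π` for a diagonal projection `π` commuting with
`l`, so `[l, X] = 0` makes `l` commute with every `x_j`, hence with `u`, and `l` preserves
`u p u⁻¹` because it preserves `p`.
-/

open Matrix

open Set

theorem List.prod_map_mul_prod_reverse_map {M κ : Type*} [Monoid M] (a b : κ → M)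
    (h : ∀ k, a k * b k = 1) (L : List κ) : (L.map a).prod * (L.reverse.map b).prod = 1 := by
  induction L with
  | nil => simp
  | cons k L ih =>
    rw [List.map_cons, List.prod_cons, List.reverse_cons, List.map_append, List.prod_append,
      mul_assoc, ← mul_assoc (List.prod _), ih]
    simp [h]

namespace Matrix

variable {ι R : Type*} [Ring R] {d : ι → ℤ}

variable (R d) in
def degreeIn (S : Set ℤ) : AddSubgroup (Matrix ι ι R) where
  carrier := {M | ∀ i j, M i j ≠ 0 → d i - d j ∈ S}
  zero_mem' := by simp
  add_mem' {a b} ha hb i j h := by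
    by_contra hS
    exact h (by rw [add_apply, not_imp_comm.1 (ha i j) hS, not_imp_comm.1 (hb i j) hS, add_zero])
  neg_mem' {a} ha i j h := ha i j (by simpa using h)

variable {S T U : Set ℤ} {M N : Matrix ι ι R}

theorem mem_degreeIn : M ∈ degreeIn R d S ↔ ∀ i j, M i j ≠ 0 → d i - d j ∈ S := Iff.rfl

theorem mem_degreeIn_zero_iff : M ∈ degreeIn R d {0} ↔ ∀ i j, d i ≠ d j → M i j = 0 := by
  rw [mem_degreeIn]
  exact forall₂_congr fun i j => by rw [mem_singleton_iff, sub_eq_zero, not_imp_comm]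

theorem coe_degreeIn_Ici_zero :
    (degreeIn R d (Ici 0) : Set (Matrix ι ι R)) = {M | ∀ i j, d i < d j → M i j = 0} := by
  ext M
  rw [SetLike.mem_coe, mem_degreeIn]
  exact forall₂_congr fun i j => by rw [mem_Ici, sub_nonneg, ← not_lt, not_imp_comm, not_not]

theorem apply_eq_zero_of_mem_degreeIn (hM : M ∈ degreeIn R d S) {i j : ι} (h : d i - d j ∉ S) :
    M i j = 0 :=
  not_imp_comm.1 (hM i j) h

theorem degreeIn_mono (h : S ⊆ T) : degreeIn R d S ≤ degreeIn R d T :=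
  fun _ hM i j hij => h (hM i j hij)

theorem apply_eq_of_sub_mem_degreeIn_Iic {A B : Matrix ι ι R} {k : ℤ}
    (h : A - B ∈ degreeIn R d (Iic k)) {i j : ι} (hij : k < d i - d j) : A i j = B i j :=
  sub_eq_zero.1 (apply_eq_zero_of_mem_degreeIn h (not_le.2 hij))

theorem single_mem_degreeIn [DecidableEq ι] {i j : ι} (c : R) (h : d i - d j ∈ S) :
    single i j c ∈ degreeIn R d S := by
  intro a b hab
  obtain ⟨rfl, rfl, -⟩ : i = a ∧ j = b ∧ c ≠ 0 := by simpa [single] using hab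
  exact h

variable [Fintype ι]

theorem mul_mem_degreeIn (hM : M ∈ degreeIn R d S) (hN : N ∈ degreeIn R d T)
    (hU : ∀ a ∈ S, ∀ b ∈ T, a + b ∈ U) : M * N ∈ degreeIn R d U := by
  intro i j hij
  obtain ⟨k, -, hk⟩ := Finset.exists_ne_zero_of_sum_ne_zero hij
  have := hU _ (hM i k (left_ne_zero_of_mul hk)) _ (hN k j (right_ne_zero_of_mul hk))
  rwa [sub_add_sub_cancel] at this

theorem mul_mem_degreeIn_Iic {a b c : ℤ} (hM : M ∈ degreeIn R d (Iic a))
    (hN : N ∈ degreeIn R d (Iic b)) (h : a + b ≤ c) : M * N ∈ degreeIn R d (Iic c) :=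
  mul_mem_degreeIn hM hN fun _ ha _ hb => (add_le_add ha hb).trans h

theorem commutator_mem_degreeIn {X : Matrix ι ι R} {k : ℤ} (hM : M ∈ degreeIn R d {0})
    (hX : X ∈ degreeIn R d {k}) : M * X - X * M ∈ degreeIn R d {k} := by
  refine sub_mem (mul_mem_degreeIn hM hX ?_) (mul_mem_degreeIn hX hM ?_) <;> simp

theorem conj_mem_degreeIn {a b : Matrix ι ι R} (ha : a ∈ degreeIn R d {0})
    (hb : b ∈ degreeIn R d {0}) (hM : M ∈ degreeIn R d S) : a * M * b ∈ degreeIn R d S :=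
  mul_mem_degreeIn (mul_mem_degreeIn (U := S) ha hM (by simp)) hb (by simp)

variable [DecidableEq ι]

theorem list_prod_map_one_add_sub_mem {κ : Type*} (y : κ → Matrix ι ι R)
    (hy : ∀ k, y k ∈ degreeIn R d (Iic (-1))) (L : List κ) :
    (L.map fun k => 1 + y k).prod - 1 - (L.map y).sum ∈ degreeIn R d (Iic (-2)) := by
  induction L with
  | nil => simp
  | cons k L ih =>
    set z := (L.map fun k => 1 + y k).prod - 1 - (L.map y).sum
    have hS : (L.map y).sum ∈ degreeIn R d (Iic (-1)) :=
      (degreeIn R d _).list_sum_mem fun _ h => by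
        obtain ⟨k, -, rfl⟩ := List.mem_map.1 h
        exact hy k
    have hz : (L.map fun k => 1 + y k).prod = 1 + (L.map y).sum + z := by
      simp only [z]; abel
    have : ((k :: L).map fun k => 1 + y k).prod - 1 - ((k :: L).map y).sum =
        z + y k * (L.map y).sum + y k * z := by
      simp only [List.map_cons, List.prod_cons, List.sum_cons]; rw [hz]; noncomm_ring
    rw [this]
    refine add_mem (add_mem ih ?_) ?_
    · exact mul_mem_degreeIn_Iic (hy k) hS (by norm_num)
    · exact mul_mem_degreeIn_Iic (hy k) ih (by norm_num)

theorem sub_one_add_sum_mem_of_mul_list_prod_eq_one {κ : Type*} (y : κ → Matrix ι ι R)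
    (hy : ∀ k, y k ∈ degreeIn R d (Iic (-1))) (hsq : ∀ k, y k * y k = 0) (L : List κ)
    {v : Matrix ι ι R} (hv : v * (L.map fun k => 1 + y k).prod = 1) :
    v - 1 + (L.map y).sum ∈ degreeIn R d (Iic (-2)) := by
  have hinv : (L.map fun k => 1 + y k).prod * (L.reverse.map fun k => 1 + -y k).prod = 1 :=
    List.prod_map_mul_prod_reverse_map _ _ (fun k => by simp [mul_add, add_mul, hsq]) L
  have hsum : (L.reverse.map fun k => -y k).sum = -(L.map y).sum := by
    rw [List.sum_neg_reverse, List.map_map, List.map_reverse]; rfl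
  rw [left_inv_eq_right_inv hv hinv, ← sub_neg_eq_add, ← hsum]
  exact list_prod_map_one_add_sub_mem (fun k => -y k) (fun k => neg_mem (hy k)) L.reverse

theorem conj_sub_mem_degreeIn_Iic {X u v : Matrix ι ι R} (hM : M ∈ degreeIn R d {0})
    (hX : X ∈ degreeIn R d {-1}) (hu : u - 1 - X ∈ degreeIn R d (Iic (-2)))
    (hv : v - 1 + X ∈ degreeIn R d (Iic (-2))) :
    v * M * u - (M + (M * X - X * M)) ∈ degreeIn R d (Iic (-2)) := by
  set z := u - 1 - X
  set z' := v - 1 + X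
  have hM0 : M ∈ degreeIn R d (Iic 0) := degreeIn_mono (by simp) hM
  have hX1 : X ∈ degreeIn R d (Iic (-1)) := degreeIn_mono (by simp) hX
  have hXM : X * M ∈ degreeIn R d (Iic (-1)) := mul_mem_degreeIn_Iic hX1 hM0 (by norm_num)
  have hz'M : z' * M ∈ degreeIn R d (Iic (-2)) := mul_mem_degreeIn_Iic hv hM0 (by norm_num)
  have : v * M * u - (M + (M * X - X * M)) =
      M * z - X * M * X - X * M * z + z' * M + z' * M * X + z' * M * z := by
    rw [show u = 1 + X + z by simp only [z]; abel, show v = 1 - X + z' by simp only [z']; abel]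
    noncomm_ring
  rw [this]
  refine add_mem (add_mem (add_mem (sub_mem (sub_mem ?_ ?_) ?_) hz'M) ?_) ?_
  · exact mul_mem_degreeIn_Iic hM0 hu (by norm_num)
  · exact mul_mem_degreeIn_Iic hXM hX1 (by norm_num)
  · exact mul_mem_degreeIn_Iic hXM hu (by norm_num)
  · exact mul_mem_degreeIn_Iic hz'M hX1 (by norm_num)
  · exact mul_mem_degreeIn_Iic hz'M hu (by norm_num)

theorem conj_apply_of_neg_two_lt {X u v : Matrix ι ι R} (hM : M ∈ degreeIn R d {0})
    (hX : X ∈ degreeIn R d {-1}) (hu : u - 1 - X ∈ degreeIn R d (Iic (-2)))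
    (hv : v - 1 + X ∈ degreeIn R d (Iic (-2))) {i j : ι} (hij : -2 < d i - d j) :
    (v * M * u) i j = M i j + (M * X - X * M) i j :=
  apply_eq_of_sub_mem_degreeIn_Iic (conj_sub_mem_degreeIn_Iic hM hX hu hv) hij

theorem mul_single_mul_apply (A B : Matrix ι ι R) (i j k : ι) :
    (A * single j j (1 : R) * B) i k = A i j * B j k := by
  simp [mul_apply, single, ite_and]

variable (R d) in
def degreeProj (c : ℤ) : Matrix ι ι R :=
  diagonal fun k => if d k = c then 1 else 0

theorem mem_degreeIn_zero_iff_forall_commute :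
    M ∈ degreeIn R d {0} ↔ ∀ c, Commute M (degreeProj R d c) := by
  simp only [commute_iff_eq, degreeProj, ← Matrix.ext_iff, mul_diagonal, diagonal_mul]
  refine ⟨fun hM c i j => ?_, fun h i j hij => ?_⟩
  · by_cases hd : d i = d j
    · rw [hd]; split_ifs <;> simp
    · simp [apply_eq_zero_of_mem_degreeIn hM (i := i) (j := j) (by simpa [sub_eq_zero])]
  · simpa [sub_eq_zero, hij] using h (d j) i j

theorem units_inv_mem_degreeIn_zero (L : (Matrix ι ι R)ˣ)
    (hL : (L : Matrix ι ι R) ∈ degreeIn R d {0}) :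
    ((L⁻¹ : (Matrix ι ι R)ˣ) : Matrix ι ι R) ∈ degreeIn R d {0} :=
  mem_degreeIn_zero_iff_forall_commute.2 fun c =>
    (mem_degreeIn_zero_iff_forall_commute.1 hL c).units_inv_left

theorem eq_sum_mul_degreeProj {κ : Type*} {x : κ → Matrix ι ι R} {s : Finset κ} {j : κ} {c : ℤ}
    (hjs : j ∈ s) (hj : ∀ i i', x j i i' ≠ 0 → d i' = c)
    (hs : ∀ k ∈ s, k ≠ j → ∀ i i', x k i i' ≠ 0 → d i' ≠ c) :
    x j = (∑ k ∈ s, x k) * degreeProj R d c := by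
  ext p q
  rw [degreeProj, mul_diagonal, sum_apply]
  split_ifs with hq
  · rw [mul_one, Finset.sum_eq_single_of_mem j hjs fun k hk hkj => ?_]
    exact not_imp_comm.1 (hs k hk hkj p q) (not_not.2 hq)
  · rw [mul_zero]
    exact not_imp_comm.1 (hj p q) hq

theorem commute_of_commute_sum {κ : Type*} {l : Matrix ι ι R} {x : κ → Matrix ι ι R}
    {s : Finset κ} {j : κ} (hl : l ∈ degreeIn R d {0}) (hlx : Commute l (∑ k ∈ s, x k))
    (hjs : j ∈ s) (hj : ∀ i i' m m', x j i i' ≠ 0 → x j m m' ≠ 0 → d i' = d m')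
    (hs : ∀ k ∈ s, k ≠ j → ∀ i i' m m', x k i i' ≠ 0 → x j m m' ≠ 0 → d i' ≠ d m') :
    Commute l (x j) := by
  by_cases hz : x j = 0
  · rw [hz]; exact Commute.zero_right l
  obtain ⟨m, m', hm⟩ : ∃ m m', x j m m' ≠ 0 := by
    by_contra! h; exact hz (Matrix.ext h)
  rw [eq_sum_mul_degreeProj hjs (fun i i' h => hj i i' m m' h hm)
    (fun k hk hkj i i' h => hs k hk hkj i i' m m' h hm)]
  exact hlx.mul_right (mem_degreeIn_zero_iff_forall_commute.1 hl _)

theorem commute_of_forall_conj_single_mem [NoZeroDivisors R] [Nontrivial R]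
    {l l' X u v : Matrix ι ι R} (hl : l ∈ degreeIn R d {0}) (hl' : l' ∈ degreeIn R d {0})
    (hl'l : l' * l = 1) (hX : X ∈ degreeIn R d {-1}) (hu : u - 1 - X ∈ degreeIn R d (Iic (-2)))
    (hv : v - 1 + X ∈ degreeIn R d (Iic (-2)))
    (h : ∀ j, v * l * u * single j j (1 : R) * (v * l' * u) ∈ degreeIn R d (Ici 0)) :
    Commute l X := by
  rw [commute_iff_eq, ← sub_eq_zero]
  ext i j
  by_cases hij : d i - d j = -1
  · obtain ⟨q, -, hq⟩ : ∃ q ∈ Finset.univ, l' j q * l q j ≠ 0 :=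
      Finset.exists_ne_zero_of_sum_ne_zero
        (by rw [← mul_apply, hl'l, one_apply_eq]; exact one_ne_zero)
    have hjq : d j - d q = 0 := hl' j q (left_ne_zero_of_mul hq)
    -- the `(i, q)` entry of `(v l u) E_jj (v l' u)` is `[l, X] i j * l' j q`
    have := apply_eq_zero_of_mem_degreeIn (h j) (i := i) (j := q) (by rw [mem_Ici]; omega)
    rw [mul_single_mul_apply, conj_apply_of_neg_two_lt hl hX hu hv (by omega),
      conj_apply_of_neg_two_lt hl' hX hu hv (by omega),
      apply_eq_zero_of_mem_degreeIn hl (by rw [mem_singleton_iff]; omega),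
      apply_eq_zero_of_mem_degreeIn (commutator_mem_degreeIn hl' hX)
        (by rw [mem_singleton_iff]; omega),
      zero_add, add_zero] at this
    exact (mul_eq_zero.1 this).resolve_right (left_ne_zero_of_mul hq)
  · exact apply_eq_zero_of_mem_degreeIn (commutator_mem_degreeIn hl hX) hij

end Matrix

theorem Commute.conj_mem_iff {M : Type*} [Monoid M] {P : Set M} {L U : Mˣ}
    (hLU : Commute (L : M) U) (hP : ∀ B ∈ P, ↑L * B * ↑L⁻¹ ∈ P)
    (hP' : ∀ B ∈ P, ↑L⁻¹ * B * ↑L ∈ P) (A : M) :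
    (∃ B ∈ P, A = U * B * ↑U⁻¹) ↔ ∃ B ∈ P, ↑L * A * ↑L⁻¹ = U * B * ↑U⁻¹ := by
  have conj_comm : ∀ a a' B : M, Commute a U → Commute a' ↑U⁻¹ →
      a * (U * B * ↑U⁻¹) * a' = U * (a * B * a') * ↑U⁻¹ := fun a a' B ha ha' => by
    simp only [mul_assoc, ← ha'.eq]
    rw [← mul_assoc a, ha.eq, mul_assoc]
  constructor
  · rintro ⟨B, hB, rfl⟩
    exact ⟨_, hP B hB, conj_comm _ _ B hLU hLU.units_inv_right.units_inv_left⟩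
  · rintro ⟨B, hB, hA⟩
    refine ⟨_, hP' B hB, ?_⟩
    calc A = ↑L⁻¹ * (↑L * A * ↑L⁻¹) * ↑L := by simp [mul_assoc]
      _ = _ := by rw [hA, conj_comm _ _ B hLU.units_inv_left hLU.units_inv_right]

theorem Units.conj_mem_of_forall_mem_iff {M : Type*} [Monoid M] {P : Set M} {L U : Mˣ}
    (H : ∀ A : M, (∃ B ∈ P, A = U * B * ↑U⁻¹) ↔ ∃ B ∈ P, ↑L * A * ↑L⁻¹ = U * B * ↑U⁻¹)
    {B : M} (hB : B ∈ P) : ↑U⁻¹ * ↑L * ↑U * B * (↑U⁻¹ * ↑L⁻¹ * ↑U) ∈ P := by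
  obtain ⟨B', hB', hLU⟩ := (H (U * B * ↑U⁻¹)).1 ⟨B, hB, rfl⟩
  convert hB' using 1
  calc _ = ↑U⁻¹ * (↑L * (U * B * ↑U⁻¹) * ↑L⁻¹) * ↑U := by simp only [mul_assoc]
    _ = B' := by rw [hLU]; simp [mul_assoc]

theorem stmt19_general (n ℓ : ℕ) (d : Fin n → ℤ)
    (x : ℕ → Matrix (Fin n) (Fin n) ℂ)
    (hx : ∀ j i i', x j i i' ≠ 0 → d i - d i' = -1)
    (hsq : ∀ j, x j * x j = 0)
    (hcol1 : ∀ j, ∀ i i' m m', x j i i' ≠ 0 → x j m m' ≠ 0 → d i' = d m')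
    (hcols : ∀ j j', j ≠ j' →
      ∀ i i' m m', x j i i' ≠ 0 → x j' m m' ≠ 0 → d i' ≠ d m')
    (u u' : Matrix (Fin n) (Fin n) ℂ)
    (hu : u = ((List.range ℓ).map fun j => (1 : Matrix (Fin n) (Fin n) ℂ) + x j).prod)
    (huu : u * u' = 1 ∧ u' * u = 1)
    (l l' : Matrix (Fin n) (Fin n) ℂ)
    (hblock : ∀ i j, d i ≠ d j → l i j = 0)
    (hl : l * l' = 1 ∧ l' * l = 1)
    (P : Set (Matrix (Fin n) (Fin n) ℂ))
    (hP : P = {B : Matrix (Fin n) (Fin n) ℂ | ∀ i j, d i < d j → B i j = 0}) :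
    (∀ A : Matrix (Fin n) (Fin n) ℂ,
        (∃ B ∈ P, A = u * B * u') ↔ (∃ B ∈ P, l * A * l' = u * B * u')) ↔
      l * (∑ j ∈ Finset.range ℓ, x j) = (∑ j ∈ Finset.range ℓ, x j) * l := by
  let L : (Matrix (Fin n) (Fin n) ℂ)ˣ := ⟨l, l', hl.1, hl.2⟩
  let U : (Matrix (Fin n) (Fin n) ℂ)ˣ := ⟨u, u', huu.1, huu.2⟩
  rw [← coe_degreeIn_Ici_zero] at hP
  subst hP
  have hx₁ (j : ℕ) : x j ∈ degreeIn ℂ d (Iic (-1)) := degreeIn_mono (S := {-1}) (by simp) (hx j)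
  have hX : ∑ j ∈ Finset.range ℓ, x j ∈ degreeIn ℂ d {-1} := sum_mem fun j _ => hx j
  have hl₀ : l ∈ degreeIn ℂ d {0} := mem_degreeIn_zero_iff.2 hblock
  have hl'₀ : l' ∈ degreeIn ℂ d {0} := units_inv_mem_degreeIn_zero L hl₀
  have hu₂ := list_prod_map_one_add_sub_mem x hx₁ (List.range ℓ)
  have hu'₂ := sub_one_add_sum_mem_of_mul_list_prod_eq_one x hx₁ hsq (List.range ℓ) (hu ▸ huu.2)
  rw [← hu] at hu₂
  rw [← commute_iff_eq]
  constructor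
  · intro H
    exact commute_of_forall_conj_single_mem hl₀ hl'₀ hl.2 hX hu₂ hu'₂ fun j =>
      Units.conj_mem_of_forall_mem_iff (L := L) (U := U) H (single_mem_degreeIn 1 (by simp))
  · intro hlX
    have hlu : Commute l u := hu ▸ Commute.list_prod_right _ _ fun y hy => by
      obtain ⟨j, hj, rfl⟩ := List.mem_map.1 hy
      exact (Commute.one_right l).add_right <| commute_of_commute_sum hl₀ hlX
        (Finset.mem_range.2 (List.mem_range.1 hj)) (hcol1 j) fun k _ hkj => hcols k j hkj
    exact Commute.conj_mem_iff (L := L) (U := U) hlu (fun _ => conj_mem_degreeIn hl₀ hl'₀)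
      (fun _ => conj_mem_degreeIn hl'₀ hl₀)

/-- `Z_L(x) = Z_L(ε(x))`: a block-diagonal invertible matrix `l` stabilizes the
translated parabolic `ε(x) = exp(x_1)⋯exp(x_ℓ) · p` (under conjugation) if and
only if it centralizes `x = x_1 + ⋯ + x_ℓ ∈ g(-1)`. -/
theorem stmt19 (n ℓ : ℕ) (d : Fin n → ℤ) (hd : Antitone d)
    (x : ℕ → Matrix (Fin n) (Fin n) ℂ)
    (hx : ∀ j i i', x j i i' ≠ 0 → d i - d i' = -1)
    (hsq : ∀ j, x j * x j = 0)
    (hcol1 : ∀ j, ∀ i i' m m', x j i i' ≠ 0 → x j m m' ≠ 0 → d i' = d m')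
    (hcols : ∀ j j', j ≠ j' →
      ∀ i i' m m', x j i i' ≠ 0 → x j' m m' ≠ 0 → d i' ≠ d m')
    (u u' : Matrix (Fin n) (Fin n) ℂ)
    (hu : u = ((List.range ℓ).map fun j => (1 : Matrix (Fin n) (Fin n) ℂ) + x j).prod)
    (huu : u * u' = 1 ∧ u' * u = 1)
    (l l' : Matrix (Fin n) (Fin n) ℂ)
    (hblock : ∀ i j, d i ≠ d j → l i j = 0)
    (hl : l * l' = 1 ∧ l' * l = 1)
    (P : Set (Matrix (Fin n) (Fin n) ℂ))
    (hP : P = {B : Matrix (Fin n) (Fin n) ℂ | ∀ i j, d i < d j → B i j = 0}) :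
    (∀ A : Matrix (Fin n) (Fin n) ℂ,
        (∃ B ∈ P, A = u * B * u') ↔ (∃ B ∈ P, l * A * l' = u * B * u')) ↔
      l * (∑ j ∈ Finset.range ℓ, x j) = (∑ j ∈ Finset.range ℓ, x j) * l :=
  stmt19_general n ℓ d x hx hsq hcol1 hcols u u' hu huu l l' hblock hl P hP
end
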